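/- arXiv:2111.06194 — 2 statements merged into one kernel-verified Lean document; each statement's English description precedes it below -/
import Mathlib

section
/- Assume the optimal value function ν is a proper lower semi-continuous function and that dom ∂ν = dom ν. Then range ∂θ = S, i.e., the set of feasible shifts equals the set of all s ∈ Y such that s ∈ ∂θ(λ) for some λ ∈ Y. -/
open Set Filter Topology Bornology Metric
open scoped RealInnerProductSpace

noncomputable section

variable {E : Type*} [NormedAddCommGroup E] [InnerProductSpace ℝ E]
variable {Y : Type*} [NormedAddCommGroup Y] [InnerProductSpace ℝ Y]

/-- The set of feasible shifts `S = {s | ∃ x, g x + s ∈ K}`. -/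
def feasShifts (g : E → Y) (K : Set Y) : Set Y := {s | ∃ x, g x + s ∈ K}

/-- The graph of the set-valued mapping `G_K(x) = -g(x) + K`,
i.e. `{(x, y) | g x + y ∈ K}`. -/
def gphGK (g : E → Y) (K : Set Y) : Set (E × Y) := {p | g p.1 + p.2 ∈ K}

/-- Recession cone of a convex set. -/
def recCone {Z : Type*} [AddCommGroup Z] [Module ℝ Z] (C : Set Z) : Set Z :=
  {d | ∀ z ∈ C, ∀ t : ℝ, 0 ≤ t → z + t • d ∈ C}

/-- Horizon (recession) function of a finite-valued function `f`. -/
def horizonFn (f : E → ℝ) (h : E) : EReal :=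
  ⨆ t : {t : ℝ // 0 < t}, (((f ((t : ℝ) • h) - f 0) / (t : ℝ) : ℝ) : EReal)

/-- The optimal value function `ν(s) = inf {f x : g x + s ∈ K}` of the shifted problem. -/
def valFn (f : E → ℝ) (g : E → Y) (K : Set Y) (s : Y) : EReal :=
  sInf ((fun x => (f x : EReal)) '' {x | g x + s ∈ K})

/-- The solution set `X(s)` of the shifted problem. -/
def solSet (f : E → ℝ) (g : E → Y) (K : Set Y) (s : Y) : Set E :=
  {x | g x + s ∈ K ∧ ∀ x', g x' + s ∈ K → f x ≤ f x'}

/-- The Lagrangian `l(x,y,λ) = f x + ⟨λ, g x - y⟩`. -/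
def lagr (f : E → ℝ) (g : E → Y) (x : E) (y : Y) (l : Y) : ℝ :=
  f x + ⟪l, g x - y⟫

/-- The augmented Lagrangian `l_r(x,y,λ) = f x + ⟨λ, g x - y⟩ + (r/2)‖g x - y‖²`. -/
def auglagr (f : E → ℝ) (g : E → Y) (r : ℝ) (x : E) (y : Y) (l : Y) : ℝ :=
  f x + ⟪l, g x - y⟫ + r / 2 * ‖g x - y‖ ^ 2

/-- The dual function `θ(λ) = - inf {l(x,y,λ) : x ∈ ℝⁿ, y ∈ K}`. -/
def dualFn (f : E → ℝ) (g : E → Y) (K : Set Y) (l : Y) : EReal :=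
  - sInf ((fun p : E × Y => ((lagr f g p.1 p.2 l : ℝ) : EReal)) '' {p | p.2 ∈ K})

/-- Fenchel conjugate of an extended-real-valued function. -/
def econj (h : Y → EReal) (l : Y) : EReal := ⨆ s : Y, (⟪l, s⟫ : EReal) - h s

/-- Convex subdifferential of an extended-real-valued function. -/
def esubdiff (h : Y → EReal) (s : Y) : Set Y :=
  {l | ∀ s', h s + (⟪l, s' - s⟫ : EReal) ≤ h s'}

/-- Convexity of an extended-real-valued function, via its epigraph. -/
def ERealConvexOn (h : Y → EReal) : Prop :=
  Convex ℝ {p : Y × ℝ | h p.1 ≤ (p.2 : EReal)}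

/-- Properness of an extended-real-valued function. -/
def ERealProper (h : Y → EReal) : Prop := (∀ s, h s ≠ ⊥) ∧ ∃ s, h s ≠ ⊤

/-- The optimal value `val(D(s)) = sup_λ [⟨s,λ⟩ - θ(λ)]` of the dual problem `D(s)`. -/
def dualVal (f : E → ℝ) (g : E → Y) (K : Set Y) (s : Y) : EReal :=
  ⨆ l : Y, (⟪s, l⟫ : EReal) - dualFn f g K l

/-- The solution set `Sol(D(s))` of the dual problem `D(s)`. -/
def dualSol (f : E → ℝ) (g : E → Y) (K : Set Y) (s : Y) : Set Y :=
  {l | ∀ l', (⟪s, l'⟫ : EReal) - dualFn f g K l' ≤ (⟪s, l⟫ : EReal) - dualFn f g K l}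

/-- The set of proximal points `argmin_{λ'} [h(λ') + ‖λ' - λ‖²/(2r)]`. -/
def proxSet (h : Y → EReal) (r : ℝ) (l : Y) : Set Y :=
  {m | ∀ m', h m + ((‖m - l‖ ^ 2 / (2 * r) : ℝ) : EReal) ≤
      h m' + ((‖m' - l‖ ^ 2 / (2 * r) : ℝ) : EReal)}

/-- The Moreau–Yosida regularization `h_r(λ) = inf_{λ'} [h(λ') + ‖λ' - λ‖²/(2r)]`. -/
def moreau (h : Y → EReal) (r : ℝ) (l : Y) : EReal :=
  ⨅ m : Y, (h m + ((‖m - l‖ ^ 2 / (2 * r) : ℝ) : EReal))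

/-!
The dual function is the Fenchel conjugate of the value function, `θ = ν*`. If `λ ∈ ∂ν(s)` with
`ν(s)` finite, the Fenchel–Young equality `ν(s) + ν*(λ) = ⟨λ, s⟩` gives `s ∈ ∂θ(λ)`; since
`dom ∂ν = dom ν = S`, this yields `S ⊆ range ∂θ`. Conversely, let `s ∈ ∂θ(λ)`, so that
`θ ≥ ⟨s, ·⟩ - c` for a real `c`. The function `ν` is convex (because `f` and `gph G_K` are) and
lower semicontinuous, so if `ν(s) = +∞` the point `(s, c)` can be strictly separated from the
closed convex epigraph of `ν`. Tilting the hyperplane by an affine minorant of `ν` (which exists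
because `∂ν` is nonempty somewhere) makes it non-vertical, i.e. produces `λ'` with
`θ(λ') < ⟨s, λ'⟩ - c`, a contradiction.
-/

theorem EReal.coe_sub_le_comm {a : ℝ} {z w : EReal} :
    (a : EReal) - z ≤ w ↔ (a : EReal) - w ≤ z := by
  induction z using EReal.rec <;> induction w using EReal.rec <;>
    simp [← EReal.coe_sub, add_comm]

theorem EReal.exists_coe_eq {z : EReal} (hbot : z ≠ ⊥) (htop : z ≠ ⊤) : ∃ a : ℝ, z = a :=
  ⟨z.toReal, (EReal.coe_toReal htop hbot).symm⟩

section Conjugate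

variable {h : Y → EReal}

theorem econj_le_coe_iff {l : Y} {M : ℝ} :
    econj h l ≤ M ↔ ∀ y (t : ℝ), h y ≤ t → ⟪l, y⟫ - t ≤ M := by
  refine ⟨fun hM y t hyt => ?_, fun hM => iSup_le fun y => ?_⟩
  · have : ((⟪l, y⟫ - t : ℝ) : EReal) ≤ M := calc
      ((⟪l, y⟫ - t : ℝ) : EReal) = (⟪l, y⟫ : EReal) - t := EReal.coe_sub _ _
      _ ≤ (⟪l, y⟫ : EReal) - h y := EReal.sub_le_sub le_rfl hyt
      _ ≤ econj h l := le_iSup (fun y => (⟪l, y⟫ : EReal) - h y) y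
      _ ≤ M := hM
    exact_mod_cast this
  obtain hbot | hbot := eq_or_ne (h y) ⊥
  · have := hM y (⟪l, y⟫ - M - 1) (by simp [hbot])
    linarith
  obtain htop | htop := eq_or_ne (h y) ⊤
  · simp [htop]
  obtain ⟨a, ha⟩ := EReal.exists_coe_eq hbot htop
  rw [ha, ← EReal.coe_sub]
  exact_mod_cast hM y a ha.le

theorem econj_le_of_mem_esubdiff {s l : Y} {a : ℝ} (hl : l ∈ esubdiff h s) (ha : h s = a) :
    econj h l ≤ ((⟪l, s⟫ - a : ℝ) : EReal) := by
  refine econj_le_coe_iff.2 fun y t hyt => ?_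
  have : ((a + ⟪l, y - s⟫ : ℝ) : EReal) ≤ t := by
    rw [EReal.coe_add, ← ha]
    exact (hl y).trans hyt
  rw [inner_sub_right] at this
  linarith [EReal.coe_le_coe_iff.1 this]

/-- Fenchel–Young: `l ∈ ∂h(s)` means `econj h l = ⟪l, s⟫ - h s`. -/
theorem mem_esubdiff_econj_of_mem_esubdiff {s l : Y} {a : ℝ} (hl : l ∈ esubdiff h s)
    (ha : h s = a) : s ∈ esubdiff (econj h) l := fun l' => calc
  econj h l + (⟪s, l' - l⟫ : EReal) ≤ ((⟪l, s⟫ - a : ℝ) : EReal) + (⟪s, l' - l⟫ : EReal) := by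
        gcongr
        exact econj_le_of_mem_esubdiff hl ha
  _ = (⟪l', s⟫ : EReal) - h s := by
        rw [ha, ← EReal.coe_add, ← EReal.coe_sub, inner_sub_right, real_inner_comm s l',
          real_inner_comm s l]
        ring_nf
  _ ≤ econj h l' := le_iSup (fun y => (⟪l', y⟫ : EReal) - h y) s

theorem exists_epigraph_separation [CompleteSpace Y] (hconv : ERealConvexOn h)
    (hlsc : LowerSemicontinuous h) {s : Y} {c : ℝ} (hsc : ¬ h s ≤ c) :
    ∃ (w : Y) (α u : ℝ), ⟪w, s⟫ + c * α < u ∧ ∀ y (t : ℝ), h y ≤ t → u < ⟪w, y⟫ + t * α := by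
  have hclosed : IsClosed {p : Y × ℝ | h p.1 ≤ p.2} := hlsc.isClosed_epigraph.preimage
    (continuous_fst.prodMk (continuous_coe_real_ereal.comp continuous_snd))
  obtain ⟨φ, u, hφs, hφC⟩ := geometric_hahn_banach_point_closed hconv hclosed
    (show (s, c) ∉ {p : Y × ℝ | h p.1 ≤ p.2} from hsc)
  set w := (InnerProductSpace.toDual ℝ Y).symm (φ.comp (ContinuousLinearMap.inl ℝ Y ℝ))
  have hφ : ∀ y t, φ (y, t) = ⟪w, y⟫ + t * φ (0, 1) := fun y t => by
    have : ((y, t) : Y × ℝ) = (y, 0) + t • ((0 : Y), (1 : ℝ)) := by simp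
    rw [this, map_add, map_smul, smul_eq_mul, InnerProductSpace.toDual_symm_apply]
    rfl
  exact ⟨w, φ (0, 1), u, hφ s c ▸ hφs, fun y t hyt => hφ y t ▸ hφC (y, t) hyt⟩

theorem epigraph_separation_coeff_nonneg {w : Y} {α u : ℝ} (hdom : ∃ y, h y ≠ ⊤)
    (hsep : ∀ y (t : ℝ), h y ≤ t → u < ⟪w, y⟫ + t * α) : 0 ≤ α := by
  obtain ⟨y, hy⟩ := hdom
  obtain ⟨t₀, hyt₀, -⟩ := EReal.lt_iff_exists_real_btwn.1 (lt_top_iff_ne_top.2 hy)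
  by_contra! hα
  set t := max t₀ ((u - ⟪w, y⟫) / α)
  have hsep_t := hsep y t (hyt₀.le.trans (EReal.coe_le_coe_iff.2 (le_max_left _ _)))
  have : t * α ≤ u - ⟪w, y⟫ := (div_le_iff_of_neg hα).1 (le_max_right _ _)
  linarith

/-- Tilting a separating hyperplane by an affine minorant of `h` makes it non-vertical. -/
theorem exists_nonvertical_epigraph_separation {w l₀ s : Y} {α u b c : ℝ} (hα : 0 ≤ α)
    (hs : ⟪w, s⟫ + c * α < u) (hsep : ∀ y (t : ℝ), h y ≤ t → u < ⟪w, y⟫ + t * α)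
    (hl₀ : econj h l₀ ≤ b) :
    ∃ (w' : Y) (α' u' : ℝ), 0 < α' ∧ ⟪w', s⟫ + c * α' < u' ∧
      ∀ y (t : ℝ), h y ≤ t → u' < ⟪w', y⟫ + t * α' := by
  set δ := u - ⟪w, s⟫ - c * α
  set τ := δ / (|b - ⟪l₀, s⟫ + c| + 1)
  have hτ : 0 < τ := div_pos (by linarith) (by positivity)
  have hτδ : τ * (b - ⟪l₀, s⟫ + c) < δ := calc
    τ * (b - ⟪l₀, s⟫ + c) ≤ τ * |b - ⟪l₀, s⟫ + c| := by gcongr; exact le_abs_self _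
    _ < τ * (|b - ⟪l₀, s⟫ + c| + 1) := by gcongr; linarith
    _ = δ := div_mul_cancel₀ _ (by positivity)
  refine ⟨w - τ • l₀, α + τ, u - τ * b, by linarith, ?_, fun y t hyt => ?_⟩
  · rw [inner_sub_left, real_inner_smul_left]
    linarith
  · have := econj_le_coe_iff.1 hl₀ y t hyt
    rw [inner_sub_left, real_inner_smul_left]
    nlinarith [hsep y t hyt]

theorem exists_econj_lt_of_nonvertical_separation {w s : Y} {α u c : ℝ} (hα : 0 < α)
    (hs : ⟪w, s⟫ + c * α < u) (hsep : ∀ y (t : ℝ), h y ≤ t → u < ⟪w, y⟫ + t * α) :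
    ∃ l, econj h l < ((⟪l, s⟫ - c : ℝ) : EReal) := by
  have hscale : ∀ y (t : ℝ), α⁻¹ * (⟪w, y⟫ + t * α) = α⁻¹ * ⟪w, y⟫ + t := fun y t => by
    field_simp
  refine ⟨-α⁻¹ • w, lt_of_le_of_lt (b := ((-(α⁻¹ * u) : ℝ) : EReal))
    (econj_le_coe_iff.2 fun y t hyt => ?_) (EReal.coe_lt_coe_iff.2 ?_)⟩
  · have := mul_lt_mul_of_pos_left (hsep y t hyt) (inv_pos.2 hα)
    rw [hscale] at this
    rw [real_inner_smul_left]
    linarith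
  · have := mul_lt_mul_of_pos_left hs (inv_pos.2 hα)
    rw [hscale] at this
    rw [real_inner_smul_left]
    linarith

/-- The pointwise half `h ≤ h**` of Fenchel–Moreau. -/
theorem exists_econj_lt_of_not_le [CompleteSpace Y] (hconv : ERealConvexOn h)
    (hlsc : LowerSemicontinuous h) (hdom : ∃ y, h y ≠ ⊤) {l₀ : Y} {b : ℝ} (hl₀ : econj h l₀ ≤ b)
    {s : Y} {c : ℝ} (hsc : ¬ h s ≤ c) : ∃ l, econj h l < ((⟪l, s⟫ - c : ℝ) : EReal) := by
  obtain ⟨w, α, u, hs, hsep⟩ := exists_epigraph_separation hconv hlsc hsc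
  obtain ⟨w', α', u', hα', hs', hsep'⟩ := exists_nonvertical_epigraph_separation
    (epigraph_separation_coeff_nonneg hdom hsep) hs hsep hl₀
  exact exists_econj_lt_of_nonvertical_separation hα' hs' hsep'

theorem ne_top_of_mem_esubdiff_econj [CompleteSpace Y] (hconv : ERealConvexOn h)
    (hlsc : LowerSemicontinuous h) (hdom : ∃ y, h y ≠ ⊤) {l₀ : Y} {b : ℝ}
    (hl₀ : econj h l₀ ≤ b) {s l : Y} (hs : s ∈ esubdiff (econj h) l) : h s ≠ ⊤ := by
  have hbot : econj h l ≠ ⊥ := by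
    obtain ⟨y, hy⟩ := hdom
    refine ne_bot_of_le_ne_bot ?_ (le_iSup (fun y => (⟪l, y⟫ : EReal) - h y) y)
    revert hy
    induction h y using EReal.rec <;> simp [← EReal.coe_sub]
  have htop : econj h l ≠ ⊤ := fun htop => by
    simpa [htop] using (hs l₀).trans hl₀
  obtain ⟨a, ha⟩ := EReal.exists_coe_eq hbot htop
  intro hs_top
  obtain ⟨l', hl'⟩ := exists_econj_lt_of_not_le hconv hlsc hdom hl₀
    (s := s) (c := ⟪s, l⟫ - a)
    (by rw [hs_top, top_le_iff]; exact EReal.coe_ne_top _)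
  refine (hs l').not_gt (hl'.trans_eq ?_)
  rw [ha, ← EReal.coe_add, inner_sub_right, real_inner_comm s l']
  ring_nf

theorem range_esubdiff_econj_eq_dom [CompleteSpace Y] (hconv : ERealConvexOn h)
    (hproper : ERealProper h) (hlsc : LowerSemicontinuous h)
    (hdomeq : {s | (esubdiff h s).Nonempty} = {s | h s ≠ ⊤}) :
    {s | ∃ l, s ∈ esubdiff (econj h) l} = {s | h s ≠ ⊤} := by
  have hsubgrad : ∀ s, h s ≠ ⊤ → ∃ l, ∃ a : ℝ, l ∈ esubdiff h s ∧ h s = a := fun s hs => by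
    obtain ⟨l, hl⟩ := hdomeq.superset hs
    obtain ⟨a, ha⟩ := EReal.exists_coe_eq (hproper.1 s) hs
    exact ⟨l, a, hl, ha⟩
  refine Subset.antisymm (fun s ⟨l, hs⟩ => ?_) fun s hs => ?_
  · obtain ⟨s₀, hs₀⟩ := hproper.2
    obtain ⟨l₀, a₀, hl₀, ha₀⟩ := hsubgrad s₀ hs₀
    exact ne_top_of_mem_esubdiff_econj hconv hlsc hproper.2 (econj_le_of_mem_esubdiff hl₀ ha₀) hs
  · obtain ⟨l, a, hl, ha⟩ := hsubgrad s hs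
    exact ⟨l, mem_esubdiff_econj_of_mem_esubdiff hl ha⟩

end Conjugate

section ValueFunction

set_option linter.unusedSectionVars false

variable {f : E → ℝ} {g : E → Y} {K : Set Y}

theorem valFn_le_coe {s : Y} {x : E} (hx : g x + s ∈ K) : valFn f g K s ≤ f x :=
  sInf_le ⟨x, hx, rfl⟩

theorem valFn_lt_coe_iff {s : Y} {t : ℝ} :
    valFn f g K s < t ↔ ∃ x, g x + s ∈ K ∧ f x < t := by
  simp [valFn, sInf_lt_iff]

theorem valFn_ne_top_iff {s : Y} : valFn f g K s ≠ ⊤ ↔ s ∈ feasShifts g K := by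
  simp [valFn, feasShifts, sInf_eq_top]

theorem eRealConvexOn_valFn (hfconv : ConvexOn ℝ univ f) (hgraph : Convex ℝ (gphGK g K)) :
    ERealConvexOn (valFn f g K) := by
  rintro ⟨s₁, t₁⟩ h₁ ⟨s₂, t₂⟩ h₂ a b ha hb hab
  refine EReal.le_of_forall_lt_iff_le.1 fun r hr => ?_
  set ε := r - (a * t₁ + b * t₂)
  have hε : 0 < ε := sub_pos.2 (EReal.coe_lt_coe_iff.1 hr)
  have hlt : ∀ t : ℝ, (t : EReal) < (t + ε : ℝ) := fun t => EReal.coe_lt_coe_iff.2 (by linarith)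
  obtain ⟨x₁, hx₁, hf₁⟩ := valFn_lt_coe_iff.1 ((show valFn f g K s₁ ≤ t₁ from h₁).trans_lt (hlt t₁))
  obtain ⟨x₂, hx₂, hf₂⟩ := valFn_lt_coe_iff.1 ((show valFn f g K s₂ ≤ t₂ from h₂).trans_lt (hlt t₂))
  have hfeas : g (a • x₁ + b • x₂) + (a • s₁ + b • s₂) ∈ K :=
    hgraph (x := (x₁, s₁)) (y := (x₂, s₂)) hx₁ hx₂ ha hb hab
  refine (valFn_le_coe hfeas).trans (EReal.coe_le_coe_iff.2 ?_)
  calc f (a • x₁ + b • x₂) ≤ a * f x₁ + b * f x₂ := hfconv.2 trivial trivial ha hb hab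
    _ ≤ a * (t₁ + ε) + b * (t₂ + ε) := by gcongr
    _ = r := by linear_combination (r - (a * t₁ + b * t₂)) * hab

/-- Substitute `s = y - g x` in the Lagrangian. -/
theorem dualFn_eq_econj_valFn : dualFn f g K = econj (valFn f g K) := by
  funext l
  refine le_antisymm ?_ (iSup_le fun s => ?_)
  · rw [dualFn, EReal.neg_le]
    refine le_sInf ?_
    rintro _ ⟨⟨x, y⟩, hy, rfl⟩
    rw [EReal.neg_le, ← EReal.coe_neg]
    have hfeas : g x + (y - g x) ∈ K := by simpa using hy
    calc ((-lagr f g x y l : ℝ) : EReal) = (⟪l, y - g x⟫ : EReal) - f x := by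
          rw [← EReal.coe_sub, lagr, ← neg_sub y, inner_neg_right]
          ring_nf
      _ ≤ (⟪l, y - g x⟫ : EReal) - valFn f g K (y - g x) :=
          EReal.sub_le_sub le_rfl (valFn_le_coe hfeas)
      _ ≤ econj (valFn f g K) l := le_iSup (fun s => (⟪l, s⟫ : EReal) - valFn f g K s) _
  · rw [EReal.coe_sub_le_comm]
    refine le_sInf ?_
    rintro _ ⟨x, hx, rfl⟩
    rw [EReal.coe_sub_le_comm, dualFn, EReal.le_neg]
    refine sInf_le_of_le ⟨(x, g x + s), hx, rfl⟩ (le_of_eq ?_)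
    rw [← EReal.coe_sub, ← EReal.coe_neg, EReal.coe_eq_coe_iff, lagr]
    simp only [sub_add_cancel_left, inner_neg_right]
    ring

end ValueFunction

theorem range_subdiff_dualFn_eq_feasShifts_general {n : ℕ} {Y : Type*} [NormedAddCommGroup Y]
    [InnerProductSpace ℝ Y] [FiniteDimensional ℝ Y]
    (f : EuclideanSpace ℝ (Fin n) → ℝ) (g : EuclideanSpace ℝ (Fin n) → Y) (K : Set Y)
    (hfconv : ConvexOn ℝ Set.univ f)
    (hgraph : Convex ℝ (gphGK g K))
    (hproper : ERealProper (valFn f g K)) (hlsc : LowerSemicontinuous (valFn f g K))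
    (hdomeq : {s | (esubdiff (valFn f g K) s).Nonempty} = {s | valFn f g K s ≠ ⊤}) :
    {s | ∃ l, s ∈ esubdiff (dualFn f g K) l} = feasShifts g K := by
  rw [dualFn_eq_econj_valFn,
    range_esubdiff_econj_eq_dom (eRealConvexOn_valFn hfconv hgraph) hproper hlsc hdomeq]
  exact Set.ext fun _ => valFn_ne_top_iff

/-- Proposition 3.4: if `ν` is proper lsc and `dom ∂ν = dom ν`, then
`range ∂θ = S`. -/
theorem range_subdiff_dualFn_eq_feasShifts {n : ℕ} {Y : Type*} [NormedAddCommGroup Y]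
    [InnerProductSpace ℝ Y] [FiniteDimensional ℝ Y]
    (f : EuclideanSpace ℝ (Fin n) → ℝ) (g : EuclideanSpace ℝ (Fin n) → Y) (K : Set Y)
    (hfconv : ConvexOn ℝ Set.univ f)
    (hKne : K.Nonempty) (hKclosed : IsClosed K) (hKconv : Convex ℝ K)
    (hgraph : Convex ℝ (gphGK g K))
    (hproper : ERealProper (valFn f g K)) (hlsc : LowerSemicontinuous (valFn f g K))
    (hdomeq : {s | (esubdiff (valFn f g K) s).Nonempty} = {s | valFn f g K s ≠ ⊤}) :
    {s | ∃ l, s ∈ esubdiff (dualFn f g K) l} = feasShifts g K :=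
  range_subdiff_dualFn_eq_feasShifts_general f g K hfconv hgraph hproper hlsc hdomeq
end
end

section
/- Assume s̄ ≠ 0, val(P(s̄)) ∈ ℝ, ν is lower semi-continuous at s̄, and Sol(D(s̄)) ≠ ∅. Let λ ∈ Y and r > 0. Then: (i) dist(λ − α s̄, Sol(D(s̄))) ≤ dist(λ, Sol(D(s̄))) for all α ≥ 0; (ii) P_{rθ}(λ) = P_{rθ_{s̄}}(λ − r s̄), where θ_{s̄}(λ) = θ(λ) − ⟨s̄, λ⟩; (iii) dist(P_{rθ}(λ), Sol(D(s̄))) ≤ dist(λ, Sol(D(s̄))). -/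
open Set Filter Topology Bornology Metric
open scoped RealInnerProductSpace

noncomputable section

variable {E : Type*} [NormedAddCommGroup E] [InnerProductSpace ℝ E]
variable {Y : Type*} [NormedAddCommGroup Y] [InnerProductSpace ℝ Y]

/-! The feasible shifts form a convex set whose minimal-norm element is `s̄`, so
`‖s̄‖² ≤ ⟪s̄, s⟫` for every feasible shift `s`. Each Lagrangian is affine in `λ` with slope
`g x - y = -s` for a feasible shift `s`, hence `θ (λ - α s̄) ≤ θ λ - α ‖s̄‖²`: the dual objective
does not decrease along `-s̄`, so `Sol(D(s̄))` is invariant under `λ ↦ λ - α s̄`, which gives (i).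
Part (ii) is completing the square. For (iii), a proximal point of the convex function `θ_{s̄}`
is at least as close as `λ - r s̄` to every minimiser of `θ_{s̄}`, that is, to every point of
`Sol(D(s̄))`; then apply (i) with `α = r`. -/

lemma inner_nonneg_of_forall_norm_le_norm_add_smul {x v : Y}
    (h : ∀ t ∈ Ioc (0 : ℝ) 1, ‖x‖ ≤ ‖x + t • v‖) : 0 ≤ ⟪x, v⟫ := by
  have hpos : ∀ t ∈ Ioc (0 : ℝ) 1, 0 ≤ 2 * ⟪x, v⟫ + t * ‖v‖ ^ 2 := by
    intro t ht
    have hsq := pow_le_pow_left₀ (norm_nonneg _) (h t ht) 2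
    rw [norm_add_sq_real, real_inner_smul_right, norm_smul, Real.norm_eq_abs, mul_pow,
      sq_abs] at hsq
    refine nonneg_of_mul_nonneg_right (a := t) ?_ ht.1
    nlinarith
  have hlim : Tendsto (fun t : ℝ => 2 * ⟪x, v⟫ + t * ‖v‖ ^ 2) (𝓝[>] 0) (𝓝 (2 * ⟪x, v⟫)) := by
    have hcont : Continuous fun t : ℝ => 2 * ⟪x, v⟫ + t * ‖v‖ ^ 2 := by fun_prop
    simpa using (hcont.tendsto 0).mono_left nhdsWithin_le_nhds
  have := ge_of_tendsto hlim (eventually_of_mem (Ioc_mem_nhdsGT one_pos) hpos)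
  linarith

lemma norm_sq_le_inner_of_forall_norm_le {C : Set Y} (hC : Convex ℝ C) {s₀ s : Y}
    (hs₀ : s₀ ∈ C) (hmin : ∀ s ∈ C, ‖s₀‖ ≤ ‖s‖) (hs : s ∈ C) : ‖s₀‖ ^ 2 ≤ ⟪s₀, s⟫ := by
  have := inner_nonneg_of_forall_norm_le_norm_add_smul (x := s₀) (v := s - s₀) fun t ht =>
    hmin _ (hC.add_smul_sub_mem hs₀ hs ⟨ht.1.le, ht.2⟩)
  rw [inner_sub_right, real_inner_self_eq_norm_sq] at this
  linarith

lemma convex_feasShifts {X : Type*} [AddCommGroup X] [Module ℝ X] {g : X → Y} {K : Set Y}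
    (h : Convex ℝ (gphGK g K)) : Convex ℝ (feasShifts g K) := by
  have : feasShifts g K = LinearMap.snd ℝ X Y '' gphGK g K := by
    ext s
    exact ⟨fun ⟨x, hx⟩ => ⟨(x, s), hx, rfl⟩, by rintro ⟨⟨x, y⟩, hp, rfl⟩; exact ⟨x, hp⟩⟩
  rw [this]
  exact h.linear_image _

lemma Metric.infDist_le_infDist_of_forall_exists_dist_le {α : Type*} [PseudoMetricSpace α]
    {x y : α} {C : Set α} (h : ∀ μ ∈ C, ∃ ν ∈ C, dist x ν ≤ dist y μ) :
    infDist x C ≤ infDist y C := by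
  rcases C.eq_empty_or_nonempty with rfl | hC
  · simp
  refine (le_infDist hC).2 fun μ hμ => ?_
  obtain ⟨ν, hν, hle⟩ := h μ hμ
  exact (infDist_le_dist_of_mem hν).trans hle

lemma Metric.infDist_sub_le_of_forall_sub_mem {α : Type*} [SeminormedAddCommGroup α]
    {C : Set α} {v : α} (h : ∀ μ ∈ C, μ - v ∈ C) (x : α) :
    infDist (x - v) C ≤ infDist x C :=
  infDist_le_infDist_of_forall_exists_dist_le fun μ hμ =>
    ⟨μ - v, h μ hμ, (dist_sub_right x μ v).le⟩

namespace ERealConvexOn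

variable {h : Y → EReal}

lemma le_of_mem_segment (hh : ERealConvexOn h) {x y z : Y} {c : ℝ} (hx : h x ≤ c)
    (hy : h y ≤ c) (hz : z ∈ segment ℝ x y) : h z ≤ c := by
  obtain ⟨a, b, ha, hb, hab, rfl⟩ := hz
  have := hh (x := (x, c)) (y := (y, c)) hx hy ha hb hab
  simpa [← add_mul, hab] using this

lemma sub_inner (hh : ERealConvexOn h) (s : Y) :
    ERealConvexOn fun m => h m - ((⟪s, m⟫ : ℝ) : EReal) := by
  let A : Y × ℝ →ₗ[ℝ] Y × ℝ := (LinearMap.fst ℝ Y ℝ).prod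
    (LinearMap.snd ℝ Y ℝ + (innerₛₗ ℝ s).comp (LinearMap.fst ℝ Y ℝ))
  have hepi : {p : Y × ℝ | h p.1 - ((⟪s, p.1⟫ : ℝ) : EReal) ≤ p.2} =
      A ⁻¹' {p | h p.1 ≤ p.2} := by
    ext ⟨m, c⟩
    simp [A, EReal.sub_le_iff_le_add]
  unfold ERealConvexOn
  rw [hepi]
  exact hh.linear_preimage A

end ERealConvexOn

section Proximal

variable {r : ℝ}

lemma proxSet_sub_inner (h : Y → EReal) (hr : r ≠ 0) (s l : Y) :
    proxSet h r l = proxSet (fun m => h m - ((⟪s, m⟫ : ℝ) : EReal)) r (l - r • s) := by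
  have key : ∀ m,
      h m - ((⟪s, m⟫ : ℝ) : EReal) + ((‖m - (l - r • s)‖ ^ 2 / (2 * r) : ℝ) : EReal)
      = h m + ((‖m - l‖ ^ 2 / (2 * r) : ℝ) : EReal) + ((r * ‖s‖ ^ 2 / 2 - ⟪l, s⟫ : ℝ) : EReal) := by
    intro m
    have e : ‖m - (l - r • s)‖ ^ 2 / (2 * r) - ⟪s, m⟫
        = ‖m - l‖ ^ 2 / (2 * r) + (r * ‖s‖ ^ 2 / 2 - ⟪l, s⟫) := by
      rw [show m - (l - r • s) = (m - l) + r • s by abel, norm_add_sq_real,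
        real_inner_smul_right, norm_smul, Real.norm_eq_abs, mul_pow, sq_abs, inner_sub_left,
        real_inner_comm s m]
      field_simp
      ring
    rw [sub_eq_add_neg, add_assoc, add_assoc, ← EReal.coe_neg, ← EReal.coe_add, ← EReal.coe_add,
      neg_add_eq_sub, e]
  ext m
  simp only [proxSet, mem_ofPred_eq, key, (EReal.addLECancellable_coe _).add_le_add_iff_right]

variable {h : Y → EReal}

lemma inner_nonneg_of_mem_proxSet (hh : ERealConvexOn h) (hr : 0 < r) {p u μ : Y}
    (hu : u ∈ proxSet h r p) (hbot : h u ≠ ⊥) (htop : h u ≠ ⊤) (hμ : h μ ≤ h u) :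
    0 ≤ ⟪u - p, μ - u⟫ := by
  obtain ⟨a, ha⟩ : ∃ a : ℝ, h u = a := ⟨_, (EReal.coe_toReal htop hbot).symm⟩
  refine inner_nonneg_of_forall_norm_le_norm_add_smul fun t ht => ?_
  have hseg : h (u + t • (μ - u)) ≤ a :=
    hh.le_of_mem_segment ha.le (hμ.trans ha.le)
      (by rw [segment_eq_image']; exact ⟨t, ⟨ht.1.le, ht.2⟩, rfl⟩)
  have hprox := (hu (u + t • (μ - u))).trans (add_le_add_left hseg _)
  rw [ha, ← EReal.coe_add, ← EReal.coe_add, EReal.coe_le_coe_iff,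
    show u + t • (μ - u) - p = u - p + t • (μ - u) by abel] at hprox
  have hsq : ‖u - p‖ ^ 2 ≤ ‖u - p + t • (μ - u)‖ ^ 2 := by
    refine (div_le_div_iff_of_pos_right (by positivity : (0 : ℝ) < 2 * r)).1 ?_
    linarith
  exact (pow_le_pow_iff_left₀ (norm_nonneg _) (norm_nonneg _) two_ne_zero).1 hsq

lemma dist_le_of_mem_proxSet (hh : ERealConvexOn h) (hr : 0 < r) {p u μ : Y}
    (hu : u ∈ proxSet h r p) (hbot : h u ≠ ⊥) (htop : h μ ≠ ⊤) (hμ : h μ ≤ h u) :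
    dist u μ ≤ dist p μ := by
  have hutop : h u ≠ ⊤ := fun hT => by
    have := hu μ
    rw [hT, EReal.top_add_coe, top_le_iff] at this
    exact EReal.add_ne_top htop (EReal.coe_ne_top _) this
  have hinner := inner_nonneg_of_mem_proxSet hh hr hu hbot hutop hμ
  have hexp : ‖p - μ‖ ^ 2 = ‖p - u‖ ^ 2 + 2 * ⟪u - p, μ - u⟫ + ‖u - μ‖ ^ 2 := by
    rw [show p - μ = (p - u) + (u - μ) by abel, norm_add_sq_real, ← inner_neg_neg, neg_sub,
      neg_sub]
  rw [dist_eq_norm, dist_eq_norm, ← sq_le_sq₀ (norm_nonneg _) (norm_nonneg _)]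
  nlinarith [sq_nonneg ‖p - u‖]

end Proximal

section Dual

variable {X : Type*} {f : X → ℝ} {g : X → Y} {K : Set Y}

lemma dualFn_le_coe_iff {l : Y} {c : ℝ} :
    dualFn f g K l ≤ c ↔ ∀ x, ∀ y ∈ K, -c ≤ lagr f g x y l := by
  rw [dualFn, EReal.neg_le, ← EReal.coe_neg, le_sInf_iff, forall_mem_image]
  simp only [mem_ofPred_eq, Prod.forall, EReal.coe_le_coe_iff]

lemma dualFn_ne_bot [Nonempty X] (hK : K.Nonempty) (l : Y) : dualFn f g K l ≠ ⊥ := by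
  intro hbot
  obtain ⟨y, hy⟩ := hK
  let x := Classical.arbitrary X
  have := dualFn_le_coe_iff.1
    (hbot.le.trans bot_le : dualFn f g K l ≤ ((-(lagr f g x y l) - 1 : ℝ) : EReal)) x y hy
  linarith

lemma eRealConvexOn_dualFn : ERealConvexOn (dualFn f g K) := by
  rintro ⟨l₁, c₁⟩ (h₁ : dualFn f g K l₁ ≤ c₁) ⟨l₂, c₂⟩ (h₂ : dualFn f g K l₂ ≤ c₂)
    a b ha hb hab
  change dualFn f g K (a • l₁ + b • l₂) ≤ ((a * c₁ + b * c₂ : ℝ) : EReal)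
  rw [dualFn_le_coe_iff] at h₁ h₂ ⊢
  intro x y hy
  have e : lagr f g x y (a • l₁ + b • l₂) = a * lagr f g x y l₁ + b * lagr f g x y l₂ := by
    simp only [lagr, inner_add_left, real_inner_smul_left]
    linear_combination (-(f x)) * hab
  rw [e]
  nlinarith [h₁ x y hy, h₂ x y hy]

lemma dualFn_sub_smul_le {d : Y} {β : ℝ} (hd : ∀ s ∈ feasShifts g K, β ≤ ⟪d, s⟫) {l : Y}
    {c α : ℝ} (hα : 0 ≤ α) (hl : dualFn f g K l ≤ c) :
    dualFn f g K (l - α • d) ≤ ((c - α * β : ℝ) : EReal) := by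
  rw [dualFn_le_coe_iff] at hl ⊢
  intro x y hy
  have hs : y - g x ∈ feasShifts g K := ⟨x, by simpa using hy⟩
  have e : lagr f g x y (l - α • d) = lagr f g x y l + α * ⟪d, y - g x⟫ := by
    simp only [lagr, inner_sub_left, inner_sub_right, real_inner_smul_left]
    ring
  nlinarith [hl x y hy, mul_le_mul_of_nonneg_left (hd _ hs) hα]

lemma mem_dualSol_iff {s μ : Y} : μ ∈ dualSol f g K s ↔
    ∀ m, dualFn f g K μ - ((⟪s, μ⟫ : ℝ) : EReal) ≤ dualFn f g K m - ((⟪s, m⟫ : ℝ) : EReal) := by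
  refine forall_congr' fun m => ?_
  rw [← EReal.neg_le_neg_iff, EReal.neg_sub (by simp) (by simp),
    EReal.neg_sub (by simp) (by simp), add_comm, add_comm (-_), ← sub_eq_add_neg,
    ← sub_eq_add_neg]

lemma dualSol_eq_univ_of_dualFn_eq_top {s μ : Y} (hμ : μ ∈ dualSol f g K s)
    (htop : dualFn f g K μ = ⊤) : dualSol f g K s = univ := by
  refine eq_univ_of_forall fun u l' => ?_
  have := hμ l'
  rw [htop, EReal.sub_top, le_bot_iff] at this
  rw [this]
  exact bot_le

lemma sub_smul_mem_dualSol [Nonempty X] (hK : K.Nonempty) {s₀ : Y}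
    (hs₀ : ∀ s ∈ feasShifts g K, ‖s₀‖ ^ 2 ≤ ⟪s₀, s⟫) {μ : Y} (hμ : μ ∈ dualSol f g K s₀)
    {α : ℝ} (hα : 0 ≤ α) : μ - α • s₀ ∈ dualSol f g K s₀ := by
  intro l'
  refine (hμ l').trans ?_
  rcases eq_or_ne (dualFn f g K μ) ⊤ with htop | htop
  · simp [htop]
  obtain ⟨c, hc⟩ : ∃ c : ℝ, dualFn f g K μ = c :=
    ⟨_, (EReal.coe_toReal htop (dualFn_ne_bot hK μ)).symm⟩
  calc (⟪s₀, μ⟫ : EReal) - dualFn f g K μ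
      = ((⟪s₀, μ - α • s₀⟫ : ℝ) : EReal) - ((c - α * ‖s₀‖ ^ 2 : ℝ) : EReal) := by
        rw [hc, ← EReal.coe_sub, ← EReal.coe_sub, inner_sub_right, real_inner_smul_right,
          real_inner_self_eq_norm_sq]
        ring_nf
    _ ≤ _ := EReal.sub_le_sub le_rfl (dualFn_sub_smul_le hs₀ hα hc.le)

end Dual

theorem prox_dist_properties_general {n : ℕ} {Y : Type*} [NormedAddCommGroup Y]
    [InnerProductSpace ℝ Y]
    (f : EuclideanSpace ℝ (Fin n) → ℝ) (g : EuclideanSpace ℝ (Fin n) → Y) (K : Set Y)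
    (hKne : K.Nonempty)
    (hgraph : Convex ℝ (gphGK g K))
    (sbar : Y) (hsbarS : sbar ∈ feasShifts g K)
    (hsbarmin : ∀ s ∈ feasShifts g K, ‖sbar‖ ≤ ‖s‖)
    (l : Y) (r : ℝ) (hr : 0 < r) :
    -- (i)
    (∀ α : ℝ, 0 ≤ α →
      Metric.infDist (l - α • sbar) (dualSol f g K sbar) ≤
        Metric.infDist l (dualSol f g K sbar)) ∧
    -- (ii)
    (proxSet (dualFn f g K) r l =
      proxSet (fun l' => dualFn f g K l' - ((⟪sbar, l'⟫ : ℝ) : EReal)) r (l - r • sbar)) ∧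
    -- (iii)
    (∀ u ∈ proxSet (dualFn f g K) r l,
      Metric.infDist u (dualSol f g K sbar) ≤ Metric.infDist l (dualSol f g K sbar)) := by
  have hsbar : ∀ s ∈ feasShifts g K, ‖sbar‖ ^ 2 ≤ ⟪sbar, s⟫ := fun s hs =>
    norm_sq_le_inner_of_forall_norm_le (convex_feasShifts hgraph) hsbarS hsbarmin hs
  have dist_shift : ∀ α : ℝ, 0 ≤ α → infDist (l - α • sbar) (dualSol f g K sbar) ≤
      infDist l (dualSol f g K sbar) := fun α hα =>
    infDist_sub_le_of_forall_sub_mem (fun μ hμ => sub_smul_mem_dualSol hKne hsbar hμ hα) l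
  have prox_shift := proxSet_sub_inner (dualFn f g K) hr.ne' sbar l
  refine ⟨dist_shift, prox_shift, fun u hu => le_trans ?_ (dist_shift r hr.le)⟩
  by_cases hdeg : ∃ μ ∈ dualSol f g K sbar, dualFn f g K μ = ⊤
  · obtain ⟨μ, hμ, hμtop⟩ := hdeg
    rw [dualSol_eq_univ_of_dualFn_eq_top hμ hμtop, infDist_zero_of_mem (mem_univ u)]
    exact infDist_nonneg
  push Not at hdeg
  refine infDist_le_infDist_of_forall_exists_dist_le fun μ hμ => ⟨μ, hμ, ?_⟩
  refine dist_le_of_mem_proxSet (eRealConvexOn_dualFn.sub_inner sbar) hr (prox_shift ▸ hu) ?_ ?_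
    (mem_dualSol_iff.1 hμ u)
  · rw [sub_eq_add_neg, ← EReal.coe_neg]
    exact EReal.add_ne_bot_iff.2 ⟨dualFn_ne_bot hKne u, EReal.coe_ne_bot _⟩
  · rw [sub_eq_add_neg, ← EReal.coe_neg]
    exact EReal.add_ne_top (hdeg μ hμ) (EReal.coe_ne_top _)

/-- Proposition 4.4: (i) moving in the direction `-s̄` does not
increase the distance to `Sol(D(s̄))`; (ii) `P_{rθ}(λ) = P_{rθ_{s̄}}(λ - r s̄)`;
(iii) a proximal step does not increase the distance to `Sol(D(s̄))`. -/
theorem prox_dist_properties {n : ℕ} {Y : Type*} [NormedAddCommGroup Y]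
    [InnerProductSpace ℝ Y] [FiniteDimensional ℝ Y]
    (f : EuclideanSpace ℝ (Fin n) → ℝ) (g : EuclideanSpace ℝ (Fin n) → Y) (K : Set Y)
    (hfconv : ConvexOn ℝ Set.univ f)
    (hKne : K.Nonempty) (hKclosed : IsClosed K) (hKconv : Convex ℝ K)
    (hgraph : Convex ℝ (gphGK g K))
    (hSclosed : IsClosed (feasShifts g K))
    (sbar : Y) (hsbarS : sbar ∈ feasShifts g K)
    (hsbarmin : ∀ s ∈ feasShifts g K, ‖sbar‖ ≤ ‖s‖)
    (hsbarne : sbar ≠ 0)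
    (hval : ∃ v : ℝ, valFn f g K sbar = (v : EReal))
    (hlsc : LowerSemicontinuousAt (valFn f g K) sbar)
    (hSolne : (dualSol f g K sbar).Nonempty)
    (l : Y) (r : ℝ) (hr : 0 < r) :
    -- (i)
    (∀ α : ℝ, 0 ≤ α →
      Metric.infDist (l - α • sbar) (dualSol f g K sbar) ≤
        Metric.infDist l (dualSol f g K sbar)) ∧
    -- (ii)
    (proxSet (dualFn f g K) r l =
      proxSet (fun l' => dualFn f g K l' - ((⟪sbar, l'⟫ : ℝ) : EReal)) r (l - r • sbar)) ∧
    -- (iii)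
    (∀ u ∈ proxSet (dualFn f g K) r l,
      Metric.infDist u (dualSol f g K sbar) ≤ Metric.infDist l (dualSol f g K sbar)) :=
  prox_dist_properties_general f g K hKne hgraph sbar hsbarS hsbarmin l r hr
end
end
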